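/- arXiv:math/9909055 — 7 statements merged into one kernel-verified Lean document; each statement's English description precedes it below -/
import Mathlib

section
/- For a natural number m, the set W = { ((j*k - 1/4)/(m+2), (j-k)/(m+2)) : j, k positive half-odd integers (i.e., of the form a + 1/2 with a a nonnegative integer) satisfying j + k ≤ m + 1 } has exactly (m+1)(m+2)/2 elements. -/
/-!
Writing `j = a + 1/2`, `k = b + 1/2` with `a, b ∈ ℕ`, the constraint `j + k ≤ m + 1` becomes
`a + b ≤ m`, which has `(m + 1)(m + 2)/2` solutions. Distinct pairs give distinct weights because
`(j, k)` is recovered from `(h, q)`: `(j + k)² = (j - k)² + 4jk` and `j + k > 0`.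
-/

def HalfOdd (x : ℚ) : Prop := ∃ a : ℕ, x = a + 1/2

open Finset

theorem eq_and_eq_of_mul_eq_of_sub_eq {R : Type*} [CommRing R] [LinearOrder R]
    [IsStrictOrderedRing R] {j k j' k' : R} (hjk : 0 ≤ j + k) (hjk' : 0 ≤ j' + k')
    (hmul : j * k = j' * k') (hsub : j - k = j' - k') : j = j' ∧ k = k' := by
  have hsq : (j + k) ^ 2 = (j' + k') ^ 2 := by
    linear_combination 4 * hmul + (j - k + j' - k') * hsub
  have hadd : j + k = j' + k' := (pow_left_inj₀ hjk hjk' two_ne_zero).1 hsq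
  constructor <;> linarith

def n2Weight (m : ℕ) (j k : ℚ) : ℚ × ℚ :=
  ((j * k - 1/4) / (m + 2), (j - k) / (m + 2))

theorem n2Weight_inj {m : ℕ} {j k j' k' : ℚ} (hjk : 0 ≤ j + k) (hjk' : 0 ≤ j' + k')
    (h : n2Weight m j k = n2Weight m j' k') : j = j' ∧ k = k' := by
  have hm : (m : ℚ) + 2 ≠ 0 := by positivity
  simp only [n2Weight, Prod.mk.injEq, div_left_inj' hm, sub_left_inj] at h
  exact eq_and_eq_of_mul_eq_of_sub_eq hjk hjk' h.1 h.2

theorem n2Weight_halfOdd_injective (m : ℕ) :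
    Function.Injective fun p : ℕ × ℕ => n2Weight m (p.1 + 1/2) (p.2 + 1/2) := by
  rintro ⟨a, b⟩ ⟨a', b'⟩ h
  obtain ⟨ha, hb⟩ := n2Weight_inj (by positivity) (by positivity) h
  simp only [add_left_inj, Nat.cast_inj] at ha hb
  rw [ha, hb]

def triangle (m : ℕ) : Finset (ℕ × ℕ) :=
  (range (m + 1)).biUnion antidiagonal

theorem mem_triangle {m : ℕ} {p : ℕ × ℕ} : p ∈ triangle m ↔ p.1 + p.2 ≤ m := by
  simp [triangle]

theorem card_triangle (m : ℕ) : #(triangle m) = (m + 1) * (m + 2) / 2 := by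
  have hdisj : (range (m + 1) : Set ℕ).PairwiseDisjoint antidiagonal := by
    intro i _ j _ hij
    rw [Function.onFun, disjoint_left]
    intro p hi hj
    exact hij ((mem_antidiagonal.1 hi).symm.trans (mem_antidiagonal.1 hj))
  rw [triangle, card_biUnion hdisj]
  simp only [Nat.card_antidiagonal]
  calc ∑ i ∈ range (m + 1), (i + 1) = ∑ i ∈ range (m + 2), i :=
        (sum_range_succ' (fun i => i) (m + 1)).symm
    _ = (m + 1) * (m + 2) / 2 := by
      rw [sum_range_id, mul_comm]; rfl

theorem weightSet_eq_image (m : ℕ) :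
    {p : ℚ × ℚ | ∃ j k : ℚ, HalfOdd j ∧ HalfOdd k ∧ 0 < j ∧ 0 < k ∧
      j + k ≤ (m : ℚ) + 1 ∧
      p = ((j * k - 1/4) / ((m : ℚ) + 2), (j - k) / ((m : ℚ) + 2))}
      = (fun p : ℕ × ℕ => n2Weight m (p.1 + 1/2) (p.2 + 1/2)) '' (triangle m) := by
  ext p
  simp only [Set.mem_ofPred_eq, Set.mem_image, Finset.mem_coe, mem_triangle, Prod.exists]
  constructor
  · rintro ⟨_, _, ⟨a, rfl⟩, ⟨b, rfl⟩, -, -, hle, rfl⟩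
    refine ⟨a, b, ?_, rfl⟩
    exact_mod_cast (by linarith : (a + b : ℚ) ≤ m)
  · rintro ⟨a, b, hle, rfl⟩
    refine ⟨a + 1/2, b + 1/2, ⟨a, rfl⟩, ⟨b, rfl⟩, by positivity, by positivity, ?_, rfl⟩
    linarith [(by exact_mod_cast hle : (a + b : ℚ) ≤ m)]

theorem stmt_0 (m : ℕ) :
    Set.ncard {p : ℚ × ℚ | ∃ j k : ℚ, HalfOdd j ∧ HalfOdd k ∧ 0 < j ∧ 0 < k ∧
      j + k ≤ (m : ℚ) + 1 ∧
      p = ((j * k - 1/4) / ((m : ℚ) + 2), (j - k) / ((m : ℚ) + 2))}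
    = (m + 1) * (m + 2) / 2 := by
  rw [weightSet_eq_image, Set.ncard_image_of_injective _ (n2Weight_halfOdd_injective m),
    Set.ncard_coe_finset, card_triangle]
end

section
/- Let m ∈ ℕ and define W = { ((jk - 1/4)/(m+2), (j-k)/(m+2)) : j, k positive half-odd integers with j + k ≤ m + 1 }. Let (h,q) ∈ W arise from parameters j, k, and for i ≥ 1 set h₁ⁱ = h + i(i(m+2) - j - k) and q₁ⁱ = q. Then (h₁ⁱ, q₁ⁱ) ∉ W. -/
def Wset (m : ℕ) : Set (ℚ × ℚ) :=
  {p | ∃ j k : ℚ, HalfOdd j ∧ HalfOdd k ∧ 0 < j ∧ 0 < k ∧ j + k ≤ (m : ℚ) + 1 ∧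
    p = ((j * k - 1/4) / ((m : ℚ) + 2), (j - k) / ((m : ℚ) + 2))}

lemma add_sq_eq_of_weight_eq {K : Type*} [Field K] [CharZero K] {t j k h q : K} (ht : t ≠ 0)
    (hh : h = (j * k - 1/4) / t) (hq : q = (j - k) / t) :
    (j + k) ^ 2 = 4 * t * h + 1 + (t * q) ^ 2 := by
  subst hh hq
  field_simp
  ring

lemma exists_add_sq_eq_of_mem_Wset {m : ℕ} {p : ℚ × ℚ} (hp : p ∈ Wset m) :
    ∃ j k : ℚ, 0 < j + k ∧ j + k ≤ (m : ℚ) + 1 ∧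
      (j + k) ^ 2 = 4 * ((m : ℚ) + 2) * p.1 + 1 + (((m : ℚ) + 2) * p.2) ^ 2 := by
  obtain ⟨j, k, -, -, hj, hk, hsum, rfl⟩ := hp
  exact ⟨j, k, by positivity, hsum, add_sq_eq_of_weight_eq (by positivity) rfl rfl⟩

lemma lt_two_mul_mul_sub {K : Type*} [Field K] [LinearOrder K] [IsStrictOrderedRing K]
    {s s' t : K} {i : ℕ} (hi : 1 ≤ i) (ht : 0 ≤ t) (hs : s ≤ t - 1) (hs' : s' ≤ t - 1) :
    s' < 2 * i * t - s := by
  have : t ≤ i * t := le_mul_of_one_le_left ht (by exact_mod_cast hi)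
  linarith

theorem stmt_3_general (m : ℕ) (j k : ℚ) (hsum : j + k ≤ (m : ℚ) + 1)
    (h q : ℚ) (hh : h = (j * k - 1/4) / ((m : ℚ) + 2))
    (hq : q = (j - k) / ((m : ℚ) + 2))
    (i : ℕ) (hi : 1 ≤ i) :
    (h + (i : ℚ) * ((i : ℚ) * ((m : ℚ) + 2) - j - k), q) ∉ Wset m := by
  intro hmem
  obtain ⟨j', k', hpos', hsum', hsq'⟩ := exists_add_sq_eq_of_mem_Wset hmem
  have hsq := add_sq_eq_of_weight_eq (by positivity) hh hq
  have hshift : (j' + k') ^ 2 = (2 * i * ((m : ℚ) + 2) - (j + k)) ^ 2 := by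
    rw [hsq']
    linear_combination -hsq
  have hlt : j' + k' < 2 * i * ((m : ℚ) + 2) - (j + k) :=
    lt_two_mul_mul_sub hi (by positivity) (by linarith) (by linarith)
  exact (pow_lt_pow_left₀ hlt hpos'.le two_ne_zero).ne hshift

theorem stmt_3 (m : ℕ) (j k : ℚ) (hj : HalfOdd j) (hk : HalfOdd k)
    (hjpos : 0 < j) (hkpos : 0 < k) (hsum : j + k ≤ (m : ℚ) + 1)
    (h q : ℚ) (hh : h = (j * k - 1/4) / ((m : ℚ) + 2))
    (hq : q = (j - k) / ((m : ℚ) + 2))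
    (i : ℕ) (hi : 1 ≤ i) :
    (h + (i : ℚ) * ((i : ℚ) * ((m : ℚ) + 2) - j - k), q) ∉ Wset m :=
  stmt_3_general m j k hsum h q hh hq i hi
end

section
/- Let m ∈ ℕ and define W as the set of pairs ((jk - 1/4)/(m+2), (j-k)/(m+2)) with j, k positive half-odd integers and j + k ≤ m + 1. Let (h,q) ∈ W come from parameters j, k, and for i ≥ 1 set h₂ⁱ = h + i(i(m+2) + j + k), q₂ⁱ = q. Then (h₂ⁱ, q₂ⁱ) ∉ W. -/
/-! If the point came from parameters `j', k'`, the second coordinate fixes `j' - k' = j - k` and the first fixes `j' * k'`, hence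
`(j' + k')² = (j' - k')² + 4 j' k' = (j + k + 2 i (m + 2))²`. Both sides being positive,
`j' + k' = j + k + 2 i (m + 2) > m + 1`, contradicting `j' + k' ≤ m + 1`. -/

theorem sq_add_eq_of_sub_eq_of_mul_eq {R : Type*} [CommRing R] {a b c d t : R}
    (hsub : a - b = c - d) (hmul : a * b = c * d + t * (t + c + d)) :
    (a + b) ^ 2 = (c + d + 2 * t) ^ 2 := by
  linear_combination (a - b + c - d) * hsub + 4 * hmul

theorem stmt_4_general (m : ℕ) (j k : ℚ)
    (hjpos : 0 < j) (hkpos : 0 < k)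
    (h q : ℚ) (hh : h = (j * k - 1/4) / ((m : ℚ) + 2))
    (hq : q = (j - k) / ((m : ℚ) + 2))
    (i : ℕ) (hi : 1 ≤ i) :
    (h + (i : ℚ) * ((i : ℚ) * ((m : ℚ) + 2) + j + k), q) ∉ Wset m := by
  rintro ⟨j', k', -, -, hj'pos, hk'pos, hsum', heq⟩
  obtain ⟨hfst, hsnd⟩ := Prod.ext_iff.mp heq
  subst hh hq
  have hM : (0 : ℚ) < m + 2 := by positivity
  have hmul : j' * k' = j * k + i * (m + 2) * (i * (m + 2) + j + k) := by
    field_simp at hfst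
    linarith
  have hsub : j' - k' = j - k := by
    field_simp at hsnd
    linarith
  have hadd : j' + k' = j + k + 2 * (i * (m + 2)) :=
    (pow_left_inj₀ (by positivity) (by positivity) two_ne_zero).mp
      (sq_add_eq_of_sub_eq_of_mul_eq hsub hmul)
  have hiM : (m : ℚ) + 2 ≤ i * (m + 2) :=
    le_mul_of_one_le_left hM.le (by exact_mod_cast hi)
  linarith

theorem stmt_4 (m : ℕ) (j k : ℚ) (hj : HalfOdd j) (hk : HalfOdd k)
    (hjpos : 0 < j) (hkpos : 0 < k) (hsum : j + k ≤ (m : ℚ) + 1)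
    (h q : ℚ) (hh : h = (j * k - 1/4) / ((m : ℚ) + 2))
    (hq : q = (j - k) / ((m : ℚ) + 2))
    (i : ℕ) (hi : 1 ≤ i) :
    (h + (i : ℚ) * ((i : ℚ) * ((m : ℚ) + 2) + j + k), q) ∉ Wset m :=
  stmt_4_general m j k hjpos hkpos h q hh hq i hi
end

section
/- Let m ∈ ℕ and define W as the set of pairs ((jk - 1/4)/(m+2), (j-k)/(m+2)) with j, k positive half-odd integers and j + k ≤ m + 1. Let (h,q) ∈ W come from parameters j, k, and for i ≥ 1 set h₃ⁱ = h + k + (i-1)(i(m+2) + j + k) and q₃ⁱ = q + 1. Then (h₃ⁱ, q₃ⁱ) ∉ W. -/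
/-!
If `(h₃ⁱ, q + 1)` came from parameters `(j', k')`, the two defining equations say
`j' - k' = j - k + (m + 2)` and `j' k' = j k + (m + 2)(k + (i - 1)(i (m + 2) + j + k))`.
Eliminating `j'` leaves a quadratic in `k'` with roots `k + (i - 1)(m + 2)` and
`-(j + i (m + 2))`; positivity of `k'` forces the first, so `j' = j + i (m + 2) > m + 1`,
contradicting `j' + k' ≤ m + 1`.
-/

section ShiftedParameters

variable {K : Type*} [Field K] [LinearOrder K] [IsStrictOrderedRing K]

lemma eq_shifted_of_sub_eq_of_mul_eq {j k j' k' M i : K} (hM : 0 ≤ M) (hi : 0 ≤ i)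
    (hj : 0 < j) (hk' : 0 < k') (hdiff : j' - k' = j - k + M)
    (hprod : j' * k' = j * k + M * (k + (i - 1) * (i * M + j + k))) :
    j' = j + i * M ∧ k' = k + (i - 1) * M := by
  have hj' : j' = k' + (j - k) + M := by linarith
  have hfactor : (k' - (k + (i - 1) * M)) * (k' + (j + i * M)) = 0 := by
    rw [hj'] at hprod
    linear_combination hprod
  have hroot_pos : 0 < k' + (j + i * M) := by positivity
  have hk'_eq : k' = k + (i - 1) * M :=
    sub_eq_zero.mp ((mul_eq_zero.mp hfactor).resolve_right hroot_pos.ne')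
  exact ⟨by rw [hj', hk'_eq]; ring, hk'_eq⟩

end ShiftedParameters

theorem stmt_5_general (m : ℕ) (j k : ℚ)
    (hjpos : 0 < j)
    (h q : ℚ) (hh : h = (j * k - 1/4) / ((m : ℚ) + 2))
    (hq : q = (j - k) / ((m : ℚ) + 2))
    (i : ℕ) (hi : 1 ≤ i) :
    (h + k + ((i : ℚ) - 1) * ((i : ℚ) * ((m : ℚ) + 2) + j + k), q + 1) ∉ Wset m := by
  rintro ⟨j', k', -, -, -, hk'pos, hsum', heq⟩
  obtain ⟨hfst, hsnd⟩ := Prod.ext_iff.mp heq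
  have hM : (0 : ℚ) ≤ m + 2 := by positivity
  have hdiff : j' - k' = j - k + (m + 2) := by
    rw [hq] at hsnd
    field_simp at hsnd
    linarith
  have hprod : j' * k' = j * k + (m + 2) * (k + (i - 1) * (i * (m + 2) + j + k)) := by
    rw [hh] at hfst
    field_simp at hfst
    linarith
  obtain ⟨rfl, rfl⟩ :=
    eq_shifted_of_sub_eq_of_mul_eq hM (Nat.cast_nonneg i) hjpos hk'pos hdiff hprod
  have hi' : (1 : ℚ) ≤ i := by exact_mod_cast hi
  have hgrowth : (m : ℚ) + 2 ≤ i * (m + 2) := le_mul_of_one_le_left hM hi'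
  linarith

theorem stmt_5 (m : ℕ) (j k : ℚ) (hj : HalfOdd j) (hk : HalfOdd k)
    (hjpos : 0 < j) (hkpos : 0 < k) (hsum : j + k ≤ (m : ℚ) + 1)
    (h q : ℚ) (hh : h = (j * k - 1/4) / ((m : ℚ) + 2))
    (hq : q = (j - k) / ((m : ℚ) + 2))
    (i : ℕ) (hi : 1 ≤ i) :
    (h + k + ((i : ℚ) - 1) * ((i : ℚ) * ((m : ℚ) + 2) + j + k), q + 1) ∉ Wset m :=
  stmt_5_general m j k hjpos h q hh hq i hi
end

section
/- Let m ∈ ℕ and define W as the set of pairs ((jk - 1/4)/(m+2), (j-k)/(m+2)) with j, k positive half-odd integers and j + k ≤ m + 1. Let (h,q) ∈ W come from parameters j, k, and for i ≥ 1 set h₅ⁱ = h + j + (i-1)(i(m+2) + j + k) and q₅ⁱ = q - 1. Then (h₅ⁱ, q₅ⁱ) ∉ W. -/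
/-! A point of `Wset m` with parameters `j, k` determines `j + k`, since
`(j + k)² = (j - k)² + 4 j k = ((m + 2) q)² + 4 (m + 2) h + 1`.
Moving to the fifth-family point raises this quantity to
`(j + k + m + 2)² + 4 (i - 1)(m + 2)(i (m + 2) + j + k) ≥ (j + k + m + 2)²`,
so the new point would need parameters with sum exceeding `m + 1`. -/

def wDisc (m : ℕ) (p : ℚ × ℚ) : ℚ := (((m : ℚ) + 2) * p.2) ^ 2 + 4 * ((m : ℚ) + 2) * p.1 + 1

lemma wDisc_param (m : ℕ) (j k : ℚ) :
    wDisc m ((j * k - 1/4) / ((m : ℚ) + 2), (j - k) / ((m : ℚ) + 2)) = (j + k) ^ 2 := by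
  unfold wDisc
  field_simp
  ring

lemma wDisc_le_of_mem_Wset {m : ℕ} {p : ℚ × ℚ} (hp : p ∈ Wset m) :
    wDisc m p ≤ ((m : ℚ) + 1) ^ 2 := by
  obtain ⟨j, k, -, -, hj, hk, hsum, rfl⟩ := hp
  rw [wDisc_param]
  exact pow_le_pow_left₀ (by positivity) hsum 2

lemma wDisc_fifth (m : ℕ) (j k i : ℚ) :
    wDisc m ((j * k - 1/4) / ((m : ℚ) + 2) + j + (i - 1) * (i * ((m : ℚ) + 2) + j + k),
      (j - k) / ((m : ℚ) + 2) - 1) =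
      (j + k + ((m : ℚ) + 2)) ^ 2 + 4 * (i - 1) * ((m : ℚ) + 2) * (i * ((m : ℚ) + 2) + j + k) := by
  unfold wDisc
  field_simp
  ring

theorem stmt_6_general (m : ℕ) (j k : ℚ)
    (hjpos : 0 < j) (hkpos : 0 < k)
    (h q : ℚ) (hh : h = (j * k - 1/4) / ((m : ℚ) + 2))
    (hq : q = (j - k) / ((m : ℚ) + 2))
    (i : ℕ) (hi : 1 ≤ i) :
    (h + j + ((i : ℚ) - 1) * ((i : ℚ) * ((m : ℚ) + 2) + j + k), q - 1) ∉ Wset m := by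
  subst hh hq
  intro hmem
  have hle := wDisc_le_of_mem_Wset hmem
  rw [wDisc_fifth] at hle
  have hi' : (0 : ℚ) ≤ (i : ℚ) - 1 := by
    rw [sub_nonneg]
    exact_mod_cast hi
  have hextra : 0 ≤ 4 * ((i : ℚ) - 1) * ((m : ℚ) + 2) * ((i : ℚ) * ((m : ℚ) + 2) + j + k) := by
    have : (0 : ℚ) ≤ (i : ℚ) * ((m : ℚ) + 2) + j + k := by positivity
    exact mul_nonneg (mul_nonneg (mul_nonneg zero_le_four hi') (by positivity)) this
  have hgt : ((m : ℚ) + 1) ^ 2 < (j + k + ((m : ℚ) + 2)) ^ 2 :=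
    pow_lt_pow_left₀ (by linarith) (by positivity) two_ne_zero
  linarith

theorem stmt_6 (m : ℕ) (j k : ℚ) (hj : HalfOdd j) (hk : HalfOdd k)
    (hjpos : 0 < j) (hkpos : 0 < k) (hsum : j + k ≤ (m : ℚ) + 1)
    (h q : ℚ) (hh : h = (j * k - 1/4) / ((m : ℚ) + 2))
    (hq : q = (j - k) / ((m : ℚ) + 2))
    (i : ℕ) (hi : 1 ≤ i) :
    (h + j + ((i : ℚ) - 1) * ((i : ℚ) * ((m : ℚ) + 2) + j + k), q - 1) ∉ Wset m :=
  stmt_6_general m j k hjpos hkpos h q hh hq i hi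
end

section
/- Let m ∈ ℕ, let j, k be positive half-odd integers with j + k ≤ m + 1, and let i be a positive integer. Then there do not exist positive half-odd integers j', k' with j' + k' ≤ m + 1 such that j'k' = (j - i(m+2))(k - i(m+2)) and j' - k' = j - k. -/
theorem add_eq_or_add_eq_neg_of_mul_eq_of_sub_eq {R : Type*} [CommRing R] [NoZeroDivisors R]
    {x y u v : R} (hmul : x * y = u * v) (hsub : x - y = u - v) :
    x + y = u + v ∨ x + y = -(u + v) := by
  have hsq : (x + y) ^ 2 = (u + v) ^ 2 := by
    linear_combination 4 * hmul + (x - y + u - v) * hsub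
  exact sq_eq_sq_iff_eq_or_eq_neg.mp hsq

theorem stmt_8_general (m : ℕ) (j k : ℚ) (hsum : j + k ≤ (m : ℚ) + 1)
    (i : ℕ) (hi : 1 ≤ i) :
    ¬ ∃ j' k' : ℚ, HalfOdd j' ∧ HalfOdd k' ∧ 0 < j' ∧ 0 < k' ∧
      j' + k' ≤ (m : ℚ) + 1 ∧
      j' * k' = (j - (i : ℚ) * ((m : ℚ) + 2)) * (k - (i : ℚ) * ((m : ℚ) + 2)) ∧
      j' - k' = j - k := by
  rintro ⟨j', k', -, -, hj'pos, hk'pos, hsum', hmul, hdiff⟩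
  have ht : (m : ℚ) + 2 ≤ i * ((m : ℚ) + 2) :=
    le_mul_of_one_le_left (by positivity) (by exact_mod_cast hi)
  rcases add_eq_or_add_eq_neg_of_mul_eq_of_sub_eq hmul (by rw [hdiff]; ring) with h | h
  · linarith
  · linarith

theorem stmt_8 (m : ℕ) (j k : ℚ) (hj : HalfOdd j) (hk : HalfOdd k)
    (hjpos : 0 < j) (hkpos : 0 < k) (hsum : j + k ≤ (m : ℚ) + 1)
    (i : ℕ) (hi : 1 ≤ i) :
    ¬ ∃ j' k' : ℚ, HalfOdd j' ∧ HalfOdd k' ∧ 0 < j' ∧ 0 < k' ∧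
      j' + k' ≤ (m : ℚ) + 1 ∧
      j' * k' = (j - (i : ℚ) * ((m : ℚ) + 2)) * (k - (i : ℚ) * ((m : ℚ) + 2)) ∧
      j' - k' = j - k :=
  stmt_8_general m j k hsum i hi
end

section
/- Let m ∈ ℕ and c = 3m/(m+2). Suppose h₁, h₂, q₁, q₂ ∈ ℚ are such that (h₁,q₁) and (h₂,q₂) both lie in W^c = { ((jk - 1/4)/(m+2), (j-k)/(m+2)) : j,k positive half-odd integers, j+k ≤ m+1 }, and suppose h₂ - h₁ ∈ (1/2)ℤ with h₂ > h₁ and h₂ - h₁ equals one of the six singular weight shifts i(i(m+2) ∓ (j₁+k₁)), k₁ + (i∓1)(i(m+2) ± (j₁+k₁)), or j₁ + (i∓1)(i(m+2) ± (j₁+k₁)) for some positive integer i (with matching charge shift q₂ - q₁ ∈ {0, 1, -1} respectively), where (j₁,k₁) are the parameters of (h₁,q₁). Then a contradiction follows; i.e., no element of W^c is a singular-vector weight of another element of W^c. -/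
section Alcove

variable {K : Type*} [Field K] [LinearOrder K] [IsStrictOrderedRing K]

lemma sum_sq_eq_of_weight {M j₁ k₁ j₂ k₂ h₁ q₁ h₂ q₂ : K} (hM : M ≠ 0)
    (hh₁ : h₁ = (j₁ * k₁ - 1/4) / M) (hq₁ : q₁ = (j₁ - k₁) / M)
    (hh₂ : h₂ = (j₂ * k₂ - 1/4) / M) (hq₂ : q₂ = (j₂ - k₂) / M) :
    (j₂ + k₂) ^ 2 =
      (j₁ + k₁) ^ 2 + M * (4 * (h₂ - h₁) + 2 * (q₂ - q₁) * (j₁ - k₁) + M * (q₂ - q₁) ^ 2) := by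
  subst hh₁ hq₁ hh₂ hq₂
  field_simp
  ring

lemma exists_sum_sq_eq_of_singular_shift {M j₁ k₁ Δh Δq : K} (hM : 0 < M) (i : ℕ) (hi : 1 ≤ i)
    (hshift :
      (Δh = i * (i * M - (j₁ + k₁)) ∧ Δq = 0) ∨
      (Δh = i * (i * M + (j₁ + k₁)) ∧ Δq = 0) ∨
      (Δh = k₁ + (i - 1) * (i * M + (j₁ + k₁)) ∧ Δq = 1) ∨
      (Δh = k₁ + (i + 1) * (i * M - (j₁ + k₁)) ∧ Δq = 1) ∨
      (Δh = j₁ + (i - 1) * (i * M + (j₁ + k₁)) ∧ Δq = -1) ∨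
      (Δh = j₁ + (i + 1) * (i * M - (j₁ + k₁)) ∧ Δq = -1)) :
    ∃ a : K,
      (M ≤ a ∧ (j₁ + k₁) ^ 2 + M * (4 * Δh + 2 * Δq * (j₁ - k₁) + M * Δq ^ 2) =
        (a + (j₁ + k₁)) ^ 2) ∨
      (2 * M ≤ a ∧ (j₁ + k₁) ^ 2 + M * (4 * Δh + 2 * Δq * (j₁ - k₁) + M * Δq ^ 2) =
        (a - (j₁ + k₁)) ^ 2) := by
  have hiM : M ≤ i * M := le_mul_of_one_le_left hM.le (by exact_mod_cast hi)
  rcases hshift with ⟨rfl, rfl⟩ | ⟨rfl, rfl⟩ | ⟨rfl, rfl⟩ | ⟨rfl, rfl⟩ | ⟨rfl, rfl⟩ | ⟨rfl, rfl⟩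
  · exact ⟨2 * i * M, .inr ⟨by linarith, by ring⟩⟩
  · exact ⟨2 * i * M, .inl ⟨by linarith, by ring⟩⟩
  · exact ⟨(2 * i - 1) * M, .inl ⟨by linarith, by ring⟩⟩
  · exact ⟨(2 * i + 1) * M, .inr ⟨by linarith, by ring⟩⟩
  · exact ⟨(2 * i - 1) * M, .inl ⟨by linarith, by ring⟩⟩
  · exact ⟨(2 * i + 1) * M, .inr ⟨by linarith, by ring⟩⟩

lemma sq_ne_add_sq_of_mem_Ioo {M a T₁ T₂ : K} (hT₁ : 0 < T₁) (hT₂ : T₂ ∈ Set.Ioo 0 M)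
    (ha : M ≤ a) : T₂ ^ 2 ≠ (a + T₁) ^ 2 := by
  intro h
  rcases sq_eq_sq_iff_eq_or_eq_neg.mp h with h | h <;> linarith [hT₂.1, hT₂.2]

lemma sq_ne_sub_sq_of_mem_Ioo {M a T₁ T₂ : K} (hT₁ : T₁ < M) (hT₂ : T₂ ∈ Set.Ioo 0 M)
    (ha : 2 * M ≤ a) : T₂ ^ 2 ≠ (a - T₁) ^ 2 := by
  intro h
  rcases sq_eq_sq_iff_eq_or_eq_neg.mp h with h | h <;> linarith [hT₂.1, hT₂.2]

end Alcove

theorem stmt_12_general (m : ℕ) (h₁ q₁ h₂ q₂ j₁ k₁ : ℚ)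
    (hj₁pos : 0 < j₁) (hk₁pos : 0 < k₁)
    (hsum₁ : j₁ + k₁ ≤ (m : ℚ) + 1)
    (hh₁ : h₁ = (j₁ * k₁ - 1/4) / ((m : ℚ) + 2))
    (hq₁ : q₁ = (j₁ - k₁) / ((m : ℚ) + 2))
    (hW₂ : (h₂, q₂) ∈ Wset m)
    (i : ℕ) (hi : 1 ≤ i)
    (hshift :
      (h₂ - h₁ = (i : ℚ) * ((i : ℚ) * ((m : ℚ) + 2) - (j₁ + k₁)) ∧ q₂ - q₁ = 0) ∨
      (h₂ - h₁ = (i : ℚ) * ((i : ℚ) * ((m : ℚ) + 2) + (j₁ + k₁)) ∧ q₂ - q₁ = 0) ∨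
      (h₂ - h₁ = k₁ + ((i : ℚ) - 1) * ((i : ℚ) * ((m : ℚ) + 2) + (j₁ + k₁)) ∧ q₂ - q₁ = 1) ∨
      (h₂ - h₁ = k₁ + ((i : ℚ) + 1) * ((i : ℚ) * ((m : ℚ) + 2) - (j₁ + k₁)) ∧ q₂ - q₁ = 1) ∨
      (h₂ - h₁ = j₁ + ((i : ℚ) - 1) * ((i : ℚ) * ((m : ℚ) + 2) + (j₁ + k₁)) ∧ q₂ - q₁ = -1) ∨
      (h₂ - h₁ = j₁ + ((i : ℚ) + 1) * ((i : ℚ) * ((m : ℚ) + 2) - (j₁ + k₁)) ∧ q₂ - q₁ = -1)) :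
    False := by
  obtain ⟨j₂, k₂, -, -, hj₂pos, hk₂pos, hsum₂, hp⟩ := hW₂
  obtain ⟨hh₂, hq₂⟩ := Prod.ext_iff.mp hp
  have hM : (0 : ℚ) < m + 2 := by positivity
  have hT₁ : j₁ + k₁ < m + 2 := by linarith
  have hT₂ : j₂ + k₂ ∈ Set.Ioo 0 ((m : ℚ) + 2) := ⟨by linarith, by linarith⟩
  have hsq := sum_sq_eq_of_weight hM.ne' hh₁ hq₁ hh₂ hq₂
  obtain ⟨a, ⟨ha, hsq'⟩ | ⟨ha, hsq'⟩⟩ := exists_sum_sq_eq_of_singular_shift hM i hi hshift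
  · exact sq_ne_add_sq_of_mem_Ioo (by linarith) hT₂ ha (hsq.trans hsq')
  · exact sq_ne_sub_sq_of_mem_Ioo hT₁ hT₂ ha (hsq.trans hsq')

theorem stmt_12 (m : ℕ) (h₁ q₁ h₂ q₂ j₁ k₁ : ℚ)
    (hj₁ : HalfOdd j₁) (hk₁ : HalfOdd k₁) (hj₁pos : 0 < j₁) (hk₁pos : 0 < k₁)
    (hsum₁ : j₁ + k₁ ≤ (m : ℚ) + 1)
    (hh₁ : h₁ = (j₁ * k₁ - 1/4) / ((m : ℚ) + 2))
    (hq₁ : q₁ = (j₁ - k₁) / ((m : ℚ) + 2))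
    (hW₂ : (h₂, q₂) ∈ Wset m)
    (hhalfint : ∃ z : ℤ, h₂ - h₁ = (z : ℚ) / 2)
    (hlt : h₁ < h₂)
    (i : ℕ) (hi : 1 ≤ i)
    (hshift :
      (h₂ - h₁ = (i : ℚ) * ((i : ℚ) * ((m : ℚ) + 2) - (j₁ + k₁)) ∧ q₂ - q₁ = 0) ∨
      (h₂ - h₁ = (i : ℚ) * ((i : ℚ) * ((m : ℚ) + 2) + (j₁ + k₁)) ∧ q₂ - q₁ = 0) ∨
      (h₂ - h₁ = k₁ + ((i : ℚ) - 1) * ((i : ℚ) * ((m : ℚ) + 2) + (j₁ + k₁)) ∧ q₂ - q₁ = 1) ∨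
      (h₂ - h₁ = k₁ + ((i : ℚ) + 1) * ((i : ℚ) * ((m : ℚ) + 2) - (j₁ + k₁)) ∧ q₂ - q₁ = 1) ∨
      (h₂ - h₁ = j₁ + ((i : ℚ) - 1) * ((i : ℚ) * ((m : ℚ) + 2) + (j₁ + k₁)) ∧ q₂ - q₁ = -1) ∨
      (h₂ - h₁ = j₁ + ((i : ℚ) + 1) * ((i : ℚ) * ((m : ℚ) + 2) - (j₁ + k₁)) ∧ q₂ - q₁ = -1)) :
    False :=
  stmt_12_general m h₁ q₁ h₂ q₂ j₁ k₁ hj₁pos hk₁pos hsum₁ hh₁ hq₁ hW₂ i hi hshift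
end
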